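/- arXiv:math/0601048 — 5 statements merged into one kernel-verified Lean document; each statement's English description precedes it below -/
import Mathlib

section
/- Dynamic Conditional Limit Theorem for Sources: Let (ν_n)_{n≥1} with ν_n ∈ R_n and d(ν_n, p) → 0 for some p ∈ P(X). Let Q ⊆ P(X) be a nonempty convex closed set with p ∉ Q, let q̂ ∈ Q be the unique maximizer of q ↦ L(q‖p) over Q with L(q̂‖p) > −∞, and assume sup_{q ∈ Q∩R_n} L(q‖ν_n) → L(Q‖p) as n → ∞. Then for every ε > 0, π_n(B(q̂,ε)∩Q|ν_n)/π_n(Q|ν_n) → 1 as n → ∞. -/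
open scoped BigOperators Classical
open Filter Topology

noncomputable section

def pmfSet (X : Type*) [Fintype X] : Set (X → ℝ) :=
  {p | (∀ x, 0 ≤ p x) ∧ ∑ x, p x = 1}

def Rn (X : Type*) [Fintype X] (n : ℕ) : Set (X → ℝ) :=
  {q | q ∈ pmfSet X ∧ ∀ x, ∃ k : ℕ, q x = (k : ℝ) / (n : ℝ)}

def ratPMF (X : Type*) [Fintype X] : Set (X → ℝ) :=
  {q | q ∈ pmfSet X ∧ ∀ x, ∃ r : ℚ, q x = (r : ℝ)}

def Ldiv {X : Type*} [Fintype X] (q p : X → ℝ) : EReal :=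
  ∑ x, if p x = 0 then (0 : EReal)
    else if q x = 0 then (⊥ : EReal)
    else (↑(p x * Real.log (q x)) : EReal)

def LSup {X : Type*} [Fintype X] (Q : Set (X → ℝ)) (p : X → ℝ) : EReal :=
  ⨆ q ∈ Q, Ldiv q p

def Idiv {X : Type*} [Fintype X] (p q : X → ℝ) : EReal :=
  ∑ x, if p x = 0 then (0 : EReal)
    else if q x = 0 then (⊤ : EReal)
    else (↑(p x * Real.log (p x / q x)) : EReal)

def typeProb {X : Type*} [Fintype X] (n : ℕ) (ν q : X → ℝ) : ℝ :=
  ∏ x, q x ^ ((n : ℝ) * ν x)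

def post {X : Type*} [Fintype X] (n : ℕ) (ν : X → ℝ) (Q : Set (X → ℝ)) : ℝ :=
  (∑' q : ↥(Q ∩ Rn X n), typeProb n ν ↑q) / (∑' q : ↥(Rn X n), typeProb n ν ↑q)

def postGen {X : Type*} [Fintype X] (w : (X → ℝ) → ℝ) (n : ℕ) (ν : X → ℝ)
    (Q : Set (X → ℝ)) : ℝ :=
  (∑' q : ↥(Q ∩ Rn X n), w ↑q * typeProb n ν ↑q) /
  (∑' q : ↥(Rn X n), w ↑q * typeProb n ν ↑q)

def tv {X : Type*} [Fintype X] (p q : X → ℝ) : ℝ := (1 / 2) * ∑ x, |p x - q x|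

def tvBall {X : Type*} [Fintype X] (q : X → ℝ) (ε : ℝ) : Set (X → ℝ) :=
  {p | p ∈ pmfSet X ∧ tv p q ≤ ε}

def elog (x : ℝ) : EReal := if x ≤ 0 then (⊥ : EReal) else (↑(Real.log x) : EReal)

def linFam {X : Type*} [Fintype X] {k : ℕ} (u : Fin k → X → ℝ) (a : Fin k → ℝ) :
    Set (X → ℝ) :=
  {q | q ∈ pmfSet X ∧ ∀ j, ∑ x, q x * u j x = a j}

def lambdaN {X : Type*} [Fintype X] (w : (X → ℝ) → ℝ) (n : ℕ) (ν : X → ℝ)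
    (C : Set (X → ℝ)) : EReal :=
  ⨆ q ∈ C ∩ {q | q ∈ Rn X n ∧ 0 < w q},
    (Ldiv q ν + (↑((1 : ℝ) / n * Real.log (w q)) : EReal))

def priorN {X : Type*} [Fintype X] (c : ℕ → (X → ℝ) → (X → ℝ)) (pr : (X → ℝ) → ℝ)
    (n : ℕ) (qn : X → ℝ) : ℝ :=
  ∑' q : ↥{q | q ∈ ratPMF X ∧ c n q = qn}, pr ↑q



set_option linter.unusedSectionVars false


lemma EReal.sum_ne_top {α : Type*} {s : Finset α} {f : α → EReal}
    (h : ∀ x ∈ s, f x ≠ ⊤) : ∑ x ∈ s, f x ≠ ⊤ := by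
  classical
  induction s using Finset.induction_on with
  | empty => simp
  | @insert a s' hx ih =>
    rw [Finset.sum_insert hx]
    exact (EReal.add_lt_top ((h a (by simp)).lt_top.ne)
      ((ih (fun x hxs => h x (by simp [hxs]))) )).ne

lemma EReal.sum_eq_bot_of {α : Type*} {s : Finset α} {f : α → EReal}
    (h : ∀ x ∈ s, f x ≠ ⊤) {i : α} (hi : i ∈ s) (hb : f i = ⊥) :
    ∑ x ∈ s, f x = ⊥ := by
  classical
  rw [← Finset.add_sum_erase _ _ hi, hb]
  rcases eq_or_ne (∑ x ∈ s.erase i, f x) ⊤ with ht | ht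
  · exact absurd ht (EReal.sum_ne_top (fun x hx => h x (Finset.mem_of_mem_erase hx)))
  · exact EReal.bot_add _

section helpers
variable {X : Type*} [Fintype X]

lemma pmf_le_one {q : X → ℝ} (hq : q ∈ pmfSet X) (x : X) : q x ≤ 1 := by
  rcases hq with ⟨h0, h1⟩
  calc q x ≤ ∑ y, q y := Finset.single_le_sum (fun y _ => h0 y) (Finset.mem_univ x)
  _ = 1 := h1

lemma ldiv_term_ne_top (q ν : X → ℝ) (x : X) :
    (if ν x = 0 then (0 : EReal) else if q x = 0 then (⊥ : EReal)
      else (↑(ν x * Real.log (q x)) : EReal)) ≠ ⊤ := by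
  split_ifs
  · simp
  · simp
  · exact EReal.coe_ne_top _

lemma ldiv_eq_bot {q ν : X → ℝ} {x : X} (hx : ν x ≠ 0) (hq : q x = 0) :
    Ldiv q ν = ⊥ := by
  refine EReal.sum_eq_bot_of (fun y _ => ldiv_term_ne_top q ν y) (Finset.mem_univ x) ?_
  simp [hx, hq]

lemma EReal.coe_finset_sum' {α : Type*} (s : Finset α) (f : α → ℝ) :
    ((∑ x ∈ s, f x : ℝ) : EReal) = ∑ x ∈ s, (f x : EReal) :=
  map_sum (⟨⟨(fun r : ℝ => (r : EReal)), EReal.coe_zero⟩, fun a b => EReal.coe_add a b⟩ : ℝ →+ EReal) f s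

lemma ldiv_eq_coe {q ν : X → ℝ} (h : ∀ x, ν x ≠ 0 → q x ≠ 0) :
    Ldiv q ν = ((∑ x, ν x * Real.log (q x) : ℝ) : EReal) := by
  rw [Ldiv, EReal.coe_finset_sum']
  refine Finset.sum_congr rfl (fun x _ => ?_)
  by_cases hx : ν x = 0
  · simp [hx]
  · simp [hx, h x hx]

lemma ldiv_nonpos {q ν : X → ℝ} (hν : ∀ x, 0 ≤ ν x) (hq : q ∈ pmfSet X) :
    Ldiv q ν ≤ 0 := by
  refine Finset.sum_nonpos (fun x _ => ?_)
  by_cases hx : ν x = 0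
  · simp [hx]
  by_cases hqx : q x = 0
  · simp [hx, hqx]
  · simp only [hx, hqx, if_false]
    rw [← EReal.coe_zero, EReal.coe_le_coe_iff]
    exact mul_nonpos_of_nonneg_of_nonpos (hν x)
      (Real.log_nonpos (hq.1 x) (pmf_le_one hq x))

lemma typeProb_nonneg (n : ℕ) (ν q : X → ℝ) (hq : ∀ x, 0 ≤ q x) :
    0 ≤ typeProb n ν q :=
  Finset.prod_nonneg (fun x _ => Real.rpow_nonneg (hq x) _)

lemma typeProb_eq_exp {n : ℕ} {ν q : X → ℝ} (hq : ∀ x, 0 ≤ q x)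
    (h : ∀ x, ν x ≠ 0 → q x ≠ 0) :
    typeProb n ν q = Real.exp ((n : ℝ) * ∑ x, ν x * Real.log (q x)) := by
  rw [Finset.mul_sum, Real.exp_sum]
  refine Finset.prod_congr rfl (fun x _ => ?_)
  by_cases hx : ν x = 0
  · simp [hx]
  · have hqx : 0 < q x := lt_of_le_of_ne (hq x) (Ne.symm (h x hx))
    rw [Real.rpow_def_of_pos hqx]
    ring_nf

lemma typeProb_eq_zero {n : ℕ} {ν q : X → ℝ} {x : X} (hn : 1 ≤ n)
    (hνx : 0 < ν x) (hqx : q x = 0) : typeProb n ν q = 0 := by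
  refine Finset.prod_eq_zero (Finset.mem_univ x) ?_
  rw [hqx]
  exact Real.zero_rpow (by positivity)

lemma typeProb_le {n : ℕ} {ν q : X → ℝ} {t : ℝ} (hn : 1 ≤ n)
    (hν : ∀ x, 0 ≤ ν x) (hq : ∀ x, 0 ≤ q x)
    (h : Ldiv q ν ≤ (t : EReal)) :
    typeProb n ν q ≤ Real.exp ((n : ℝ) * t) := by
  by_cases hbad : ∃ x, ν x ≠ 0 ∧ q x = 0
  · obtain ⟨x, hx, hqx⟩ := hbad
    rw [typeProb_eq_zero hn (lt_of_le_of_ne (hν x) (Ne.symm hx)) hqx]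
    positivity
  · push_neg at hbad
    have h2 : ∀ x, ν x ≠ 0 → q x ≠ 0 := fun x hx => hbad x hx
    rw [typeProb_eq_exp hq h2]
    rw [ldiv_eq_coe h2, EReal.coe_le_coe_iff] at h
    exact Real.exp_le_exp.2 (mul_le_mul_of_nonneg_left h (Nat.cast_nonneg n))

lemma typeProb_ge {n : ℕ} {ν q : X → ℝ} {t : ℝ}
    (hq : ∀ x, 0 ≤ q x) (h : (t : EReal) ≤ Ldiv q ν) :
    Real.exp ((n : ℝ) * t) ≤ typeProb n ν q := by
  have h2 : ∀ x, ν x ≠ 0 → q x ≠ 0 := by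
    intro x hx hqx
    rw [ldiv_eq_bot hx hqx] at h
    exact absurd h (by simp)
  rw [typeProb_eq_exp hq h2]
  rw [ldiv_eq_coe h2, EReal.coe_le_coe_iff] at h
  exact Real.exp_le_exp.2 (mul_le_mul_of_nonneg_left h (Nat.cast_nonneg n))

end helpers

set_option linter.unusedSectionVars false

section fin
variable {X : Type*} [Fintype X]

lemma Rn_floor {n : ℕ} (hn : 1 ≤ n) {q : X → ℝ} (hq : q ∈ Rn X n) (x : X) :
    q x = (⌊q x * n⌋₊ : ℝ) / n := by
  obtain ⟨k, hk⟩ := hq.2 x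
  have hn0 : (n : ℝ) ≠ 0 := Nat.cast_ne_zero.2 (by omega)
  have : q x * n = (k : ℝ) := by rw [hk]; field_simp
  rw [this, Nat.floor_natCast, hk]

lemma Rn_idx_le {n : ℕ} (hn : 1 ≤ n) {q : X → ℝ} (hq : q ∈ Rn X n) (x : X) :
    ⌊q x * n⌋₊ ≤ n := by
  have h1 : q x ≤ 1 := pmf_le_one hq.1 x
  have : q x * n ≤ (n : ℝ) := by
    nlinarith [Nat.cast_nonneg (α := ℝ) n]
  calc ⌊q x * n⌋₊ ≤ ⌊(n : ℝ)⌋₊ := Nat.floor_le_floor this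
  _ = n := Nat.floor_natCast n

def rnEmb (n : ℕ) (q : X → ℝ) : X → Fin (n + 1) :=
  fun x => ⟨min n ⌊q x * n⌋₊, Nat.lt_succ_of_le (min_le_left _ _)⟩

lemma rnEmb_injOn {n : ℕ} (hn : 1 ≤ n) : Set.InjOn (rnEmb (X := X) n) (Rn X n) := by
  intro q hq q' hq' h
  funext x
  have h1 := Rn_floor hn hq x
  have h2 := Rn_floor hn hq' x
  have e : min n ⌊q x * n⌋₊ = min n ⌊q' x * n⌋₊ := congrArg Fin.val (congrFun h x)
  rw [min_eq_right (Rn_idx_le hn hq x), min_eq_right (Rn_idx_le hn hq' x)] at e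
  rw [h1, h2, e]

lemma Rn_finite (n : ℕ) (hn : 1 ≤ n) : (Rn X n).Finite := by
  have : Set.Finite (Set.univ : Set (X → Fin (n+1))) := Set.finite_univ
  exact Set.Finite.of_finite_image (Set.Finite.subset this (Set.subset_univ _))
    (rnEmb_injOn hn)

lemma sub_finite {n : ℕ} (hn : 1 ≤ n) {S : Set (X → ℝ)} (hS : S ⊆ Rn X n) :
    S.Finite := (Rn_finite n hn).subset hS

lemma tsum_finite {n : ℕ} (hn : 1 ≤ n) {S : Set (X → ℝ)} (hS : S ⊆ Rn X n)
    (f : (X → ℝ) → ℝ) :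
    ∑' q : ↥S, f ↑q = ∑ q ∈ (sub_finite hn hS).toFinset, f q := by
  have h1 : S = ((sub_finite hn hS).toFinset : Set (X → ℝ)) :=
    ((sub_finite hn hS).coe_toFinset).symm
  rw [tsum_congr_set_coe f h1]
  exact Finset.tsum_subtype _ f

lemma card_le {n : ℕ} (hn : 1 ≤ n) {S : Set (X → ℝ)} (hS : S ⊆ Rn X n) :
    ((sub_finite hn hS).toFinset.card : ℝ) ≤ ((n + 1) ^ (Fintype.card X) : ℝ) := by
  have h := Finset.card_le_card_of_injOn (t := (Finset.univ : Finset (X → Fin (n+1))))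
    (rnEmb (X := X) n) (fun q _ => Finset.mem_univ _)
    ((rnEmb_injOn hn).mono (by
      rw [(sub_finite hn hS).coe_toFinset]; exact hS))
  have h2 : (Finset.univ : Finset (X → Fin (n+1))).card = (n+1) ^ (Fintype.card X) := by
    simp [Fintype.card_pi]
  rw [h2] at h
  calc ((sub_finite hn hS).toFinset.card : ℝ) ≤ (((n+1) ^ (Fintype.card X) : ℕ) : ℝ) :=
        Nat.cast_le.2 h
  _ = ((n + 1) ^ (Fintype.card X) : ℝ) := by push_cast; ring

end fin

section topo
variable {X : Type*} [Fintype X]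

lemma tv_continuous (qhat : X → ℝ) : Continuous (fun q : X → ℝ => tv q qhat) := by
  unfold tv
  exact continuous_const.mul (continuous_finset_sum _ (fun x _ =>
    ((continuous_apply x).sub continuous_const).abs))

lemma tv_self (q : X → ℝ) : tv q q = 0 := by simp [tv]

lemma pmfSet_isClosed : IsClosed (pmfSet X) := by
  have h1 : IsClosed {p : X → ℝ | ∀ x, 0 ≤ p x} := by
    have he : {p : X → ℝ | ∀ x, 0 ≤ p x} = ⋂ x, {p : X → ℝ | 0 ≤ p x} := by
      ext; simp
    rw [he]
    exact isClosed_iInter (fun x => isClosed_le continuous_const (continuous_apply x))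
  have h2 : IsClosed {p : X → ℝ | ∑ x, p x = 1} :=
    isClosed_eq (continuous_finset_sum _ (fun x _ => continuous_apply x)) continuous_const
  exact (h1.inter h2)

lemma pmfSet_isCompact : IsCompact (pmfSet X) := by
  refine IsCompact.of_isClosed_subset (isCompact_univ_pi (fun _ : X => isCompact_Icc (a := (0:ℝ)) (b := 1)))
    pmfSet_isClosed ?_
  intro q hq
  exact fun x _ => ⟨hq.1 x, pmf_le_one hq x⟩

lemma Q_isCompact {Q : Set (X → ℝ)} (hQsub : Q ⊆ pmfSet X)
    (hQclosed : IsClosed {r : ↥(pmfSet X) | ↑r ∈ Q}) : IsCompact Q := by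
  haveI : CompactSpace ↥(pmfSet X) :=
    isCompact_iff_compactSpace.1 (pmfSet_isCompact (X := X))
  have h1 : Q = Subtype.val '' {r : ↥(pmfSet X) | ↑r ∈ Q} := by
    ext q
    constructor
    · intro hq; exact ⟨⟨q, hQsub hq⟩, hq, rfl⟩
    · rintro ⟨r, hr, rfl⟩; exact hr
  rw [h1]
  exact (hQclosed.isCompact).image continuous_subtype_val

lemma ldiv_le_term {q p : X → ℝ} (hp : ∀ x, 0 ≤ p x) (hq : q ∈ pmfSet X)
    {x : X} (hpx : p x ≠ 0) (hqx : q x ≠ 0) :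
    Ldiv q p ≤ ((p x * Real.log (q x) : ℝ) : EReal) := by
  rw [Ldiv, ← Finset.add_sum_erase _ _ (Finset.mem_univ x)]
  simp only [hpx, hqx, if_false]
  have h2 : ∑ y ∈ Finset.univ.erase x,
      (if p y = 0 then (0:EReal) else if q y = 0 then (⊥:EReal)
        else (↑(p y * Real.log (q y)) : EReal)) ≤ 0 := by
    refine Finset.sum_nonpos (fun y _ => ?_)
    by_cases hy : p y = 0
    · simp [hy]
    by_cases hqy : q y = 0
    · simp [hy, hqy]
    · simp only [hy, hqy, if_false]
      rw [← EReal.coe_zero, EReal.coe_le_coe_iff]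
      exact mul_nonpos_of_nonneg_of_nonpos (hp y)
        (Real.log_nonpos (hq.1 y) (pmf_le_one hq y))
  calc (↑(p x * Real.log (q x)) : EReal) + ∑ y ∈ Finset.univ.erase x, _
      ≤ (↑(p x * Real.log (q x)) : EReal) + 0 := add_le_add le_rfl h2
  _ = _ := add_zero _

lemma separation {Q : Set (X → ℝ)} (hQsub : Q ⊆ pmfSet X) (hQcompact : IsCompact Q)
    {p qhat : X → ℝ} (hp : p ∈ pmfSet X) (hqhatQ : qhat ∈ Q)
    (hmax : ∀ q ∈ Q, Ldiv q p ≤ Ldiv qhat p)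
    (huniq : ∀ q ∈ Q, Ldiv q p = Ldiv qhat p → q = qhat)
    {L : ℝ} (hL : Ldiv qhat p = (L : EReal)) {ε : ℝ} (hε : 0 < ε) :
    ∃ c : ℝ, c < L ∧ ∀ q ∈ Q, ε ≤ tv q qhat → Ldiv q p ≤ (c : EReal) := by
  by_contra hcon
  push_neg at hcon
  have H : ∀ k : ℕ, ∃ q, (q ∈ Q ∧ ε ≤ tv q qhat) ∧
      (↑(L - ((k:ℝ)+1)⁻¹) : EReal) < Ldiv q p := by
    intro k
    obtain ⟨q, hq1, hq2, hq3⟩ := hcon (L - ((k:ℝ)+1)⁻¹) (by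
      have : (0:ℝ) < ((k:ℝ)+1)⁻¹ := by positivity
      linarith)
    exact ⟨q, ⟨hq1, hq2⟩, hq3⟩
  choose u hu hu2 using H
  have hK : IsCompact (Q ∩ {q | ε ≤ tv q qhat}) :=
    hQcompact.inter_right (isClosed_le continuous_const (tv_continuous qhat))
  obtain ⟨qoo, hqooK, φ, hφ, hconv⟩ := hK.tendsto_subseq hu
  -- lower bound on coordinates
  have hb : ∀ k : ℕ, ∀ x : X, p x ≠ 0 → Real.exp ((L-1)/p x) ≤ u k x := by
    intro k x hpx
    have hL1 : (↑(L - 1) : EReal) ≤ ↑(L - ((k:ℝ)+1)⁻¹) := by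
      rw [EReal.coe_le_coe_iff]
      have h1 : ((k:ℝ)+1)⁻¹ ≤ 1 := by
        rw [inv_le_one_iff₀]; right; linarith [Nat.cast_nonneg (α := ℝ) k]
      linarith
    have h1 : (↑(L - 1) : EReal) < Ldiv (u k) p := lt_of_le_of_lt hL1 (hu2 k)
    have hqk : u k x ≠ 0 := by
      intro h0
      rw [ldiv_eq_bot hpx h0] at h1
      exact absurd h1 (by simp)
    have hterm := ldiv_le_term hp.1 (hQsub (hu k).1) hpx hqk
    have h2 : L - 1 < p x * Real.log (u k x) := by
      have := lt_of_lt_of_le h1 hterm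
      exact_mod_cast this
    have hpxpos : 0 < p x := lt_of_le_of_ne (hp.1 x) (Ne.symm hpx)
    have h3 : (L-1)/p x < Real.log (u k x) := by
      rw [div_lt_iff₀ hpxpos]
      linarith [mul_comm (p x) (Real.log (u k x))]
    have hqkpos : 0 < u k x := lt_of_le_of_ne ((hQsub (hu k).1).1 x) (Ne.symm hqk)
    calc Real.exp ((L-1)/p x) ≤ Real.exp (Real.log (u k x)) :=
          Real.exp_le_exp.2 h3.le
    _ = u k x := Real.exp_log hqkpos
  have hcoord : ∀ x : X, Filter.Tendsto (fun k => u (φ k) x) atTop (nhds (qoo x)) :=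
    fun x => ((continuous_apply x).tendsto qoo).comp hconv
  have hqoopos : ∀ x : X, p x ≠ 0 → 0 < qoo x := by
    intro x hpx
    have h1 : Real.exp ((L-1)/p x) ≤ qoo x :=
      ge_of_tendsto (hcoord x) (Filter.Eventually.of_forall (fun k => hb (φ k) x hpx))
    exact lt_of_lt_of_le (Real.exp_pos _) h1
  set F : (X → ℝ) → ℝ := fun q => ∑ x, p x * Real.log (q x) with hF
  have hFcont : Filter.Tendsto (fun k => F (u (φ k))) atTop (nhds (F qoo)) := by
    refine tendsto_finset_sum _ (fun x _ => ?_)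
    by_cases hpx : p x = 0
    · simp only [hpx, zero_mul]
      exact tendsto_const_nhds
    · exact (tendsto_const_nhds.mul
        ((Real.continuousAt_log (ne_of_gt (hqoopos x hpx))).tendsto.comp (hcoord x)))
  have hne : ∀ k, ∀ x, p x ≠ 0 → u (φ k) x ≠ 0 :=
    fun k x hpx => ne_of_gt (lt_of_lt_of_le (Real.exp_pos _) (hb (φ k) x hpx))
  have hFlb : ∀ k : ℕ, L - ((k:ℝ)+1)⁻¹ ≤ F (u (φ k)) := by
    intro k
    have h1 := hu2 (φ k)
    rw [ldiv_eq_coe (fun x hx => hne k x hx)] at h1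
    have h2 : L - ((k:ℝ)+1)⁻¹ ≤ L - (((φ k : ℝ))+1)⁻¹ := by
      have : (k:ℝ) ≤ (φ k : ℝ) := Nat.cast_le.2 (hφ.le_apply)
      have h3 : ((φ k : ℝ)+1)⁻¹ ≤ ((k:ℝ)+1)⁻¹ := by
        apply inv_anti₀ (by positivity) (by linarith)
      linarith
    exact le_trans h2 (le_of_lt (EReal.coe_lt_coe_iff.1 h1))
  have hFqoo : L ≤ F qoo := by
    refine le_of_tendsto_of_tendsto' (f := fun k : ℕ => L - ((k:ℝ)+1)⁻¹) ?_ hFcont hFlb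
    have h1 : Filter.Tendsto (fun k : ℕ => ((k:ℝ)+1)⁻¹) atTop (nhds 0) :=
      tendsto_one_div_add_atTop_nhds_zero_nat.congr (fun k => by rw [one_div])
    have h2 : Filter.Tendsto (fun _ : ℕ => L) atTop (nhds L) := tendsto_const_nhds
    simpa using h2.sub h1
  have hLdivqoo : Ldiv qoo p = ((F qoo : ℝ) : EReal) :=
    ldiv_eq_coe (fun x hx => ne_of_gt (hqoopos x hx))
  have heq : Ldiv qoo p = Ldiv qhat p := by
    refine le_antisymm (hmax qoo hqooK.1) ?_
    rw [hL, hLdivqoo]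
    exact_mod_cast hFqoo
  have := huniq qoo hqooK.1 heq
  rw [this] at hqooK
  have h0 := hqooK.2
  rw [Set.mem_setOf_eq, tv_self] at h0
  linarith

end topo

section perturb
variable {X : Type*} [Fintype X]

lemma log_pmf_nonpos {q : X → ℝ} (hq : q ∈ pmfSet X) (x : X) : Real.log (q x) ≤ 0 :=
  Real.log_nonpos (hq.1 x) (pmf_le_one hq x)

lemma ldiv_perturb {p ν q : X → ℝ} (hp : p ∈ pmfSet X) (hν : ∀ x, 0 ≤ ν x)
    (hq : q ∈ pmfSet X) {η c : ℝ} (hη0 : 0 ≤ η) (hη1 : η < 1)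
    (hlow : ∀ x, p x ≠ 0 → (1 - η) * p x ≤ ν x)
    (hc : Ldiv q p ≤ (c : EReal)) :
    Ldiv q ν ≤ (((1 - η) * c : ℝ) : EReal) := by
  by_cases hbad : ∃ x, ν x ≠ 0 ∧ q x = 0
  · obtain ⟨x, hx, hqx⟩ := hbad
    rw [ldiv_eq_bot hx hqx]
    exact bot_le
  · push_neg at hbad
    have hqν : ∀ x, ν x ≠ 0 → q x ≠ 0 := hbad
    have hqp : ∀ x, p x ≠ 0 → q x ≠ 0 := by
      intro x hpx
      have hppos : 0 < p x := lt_of_le_of_ne (hp.1 x) (Ne.symm hpx)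
      have hνx : 0 < ν x := lt_of_lt_of_le (by nlinarith) (hlow x hpx)
      exact hqν x (ne_of_gt hνx)
    rw [ldiv_eq_coe hqν]
    rw [ldiv_eq_coe hqp, EReal.coe_le_coe_iff] at hc
    rw [EReal.coe_le_coe_iff]
    have step : ∑ x, ν x * Real.log (q x) ≤ (1-η) * ∑ x, p x * Real.log (q x) := by
      rw [Finset.mul_sum]
      refine Finset.sum_le_sum (fun x _ => ?_)
      by_cases hpx : p x = 0
      · rw [hpx]
        simp only [mul_zero, zero_mul, mul_zero]
        exact mul_nonpos_of_nonneg_of_nonpos (hν x) (log_pmf_nonpos hq x)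
      · rw [← mul_assoc]
        exact mul_le_mul_of_nonpos_right (hlow x hpx) (log_pmf_nonpos hq x)
    calc ∑ x, ν x * Real.log (q x) ≤ (1-η) * ∑ x, p x * Real.log (q x) := step
    _ ≤ (1-η) * c := mul_le_mul_of_nonneg_left hc (by linarith)

end perturb

lemma poly_exp_tendsto (m : ℕ) {a : ℝ} (ha : 0 < a) :
    Filter.Tendsto (fun n : ℕ => ((n:ℝ)+1)^m * Real.exp (-(a * n))) Filter.atTop (nhds 0) := by
  set r := Real.exp (-a) with hr
  have hrpos : 0 < r := Real.exp_pos _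
  have hr1 : r < 1 := by
    rw [hr, Real.exp_lt_one_iff]
    linarith
  have h := tendsto_pow_const_mul_const_pow_of_lt_one m hrpos.le hr1
  have h2 := h.comp (tendsto_add_atTop_nat 1)
  have h3 := h2.mul_const r⁻¹
  rw [zero_mul] at h3
  refine h3.congr (fun n => ?_)
  have hc : ((n+1:ℕ):ℝ) = (n:ℝ)+1 := by push_cast; ring
  have hrn : r ^ n = Real.exp (-(a * n)) := by
    rw [hr, ← Real.exp_nat_mul]
    congr 1
    ring
  simp only [Function.comp_apply, hc]
  rw [pow_succ]
  field_simp
  rw [hrn]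
  ring


/-- Dynamic Conditional Limit Theorem for Sources. -/
theorem dynamic_CoLT_for_sources {X : Type*} [Fintype X] [Nonempty X]
    (ν : ℕ → X → ℝ) (hν : ∀ n, 1 ≤ n → ν n ∈ Rn X n)
    (p : X → ℝ) (hp : p ∈ pmfSet X)
    (hconv : Filter.Tendsto (fun n => tv (ν n) p) Filter.atTop (nhds 0))
    (Q : Set (X → ℝ)) (hQsub : Q ⊆ pmfSet X) (hQne : Q.Nonempty)
    (hQconv : Convex ℝ Q) (hQclosed : IsClosed {r : ↥(pmfSet X) | ↑r ∈ Q})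
    (hrare : p ∉ Q)
    (qhat : X → ℝ) (hqhatQ : qhat ∈ Q)
    (hmax : ∀ q ∈ Q, Ldiv q p ≤ Ldiv qhat p)
    (huniq : ∀ q ∈ Q, Ldiv q p = Ldiv qhat p → q = qhat)
    (hfin : ⊥ < Ldiv qhat p)
    (hrealize : Filter.Tendsto (fun n : ℕ => LSup (Q ∩ Rn X n) (ν n))
      Filter.atTop (nhds (LSup Q p))) :
    ∀ ε : ℝ, 0 < ε →
      Filter.Tendsto
        (fun n : ℕ => post n (ν n) (tvBall qhat ε ∩ Q) / post n (ν n) Q)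
        Filter.atTop (nhds 1) := by
  intro ε hε
  classical
  set m := Fintype.card X with hm
  have hQcomp : IsCompact Q := Q_isCompact hQsub hQclosed
  -- the finite value L
  have hL0 : Ldiv qhat p ≤ 0 := ldiv_nonpos hp.1 (hQsub hqhatQ)
  obtain ⟨L, hL⟩ : ∃ L : ℝ, Ldiv qhat p = (L : EReal) := by
    have hne1 : Ldiv qhat p ≠ ⊥ := hfin.ne'
    have hne2 : Ldiv qhat p ≠ ⊤ := (lt_of_le_of_lt hL0 (by
      rw [← EReal.coe_zero]; exact EReal.coe_lt_top 0)).ne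
    exact ⟨(Ldiv qhat p).toReal, (EReal.coe_toReal hne2 hne1).symm⟩
  have hLle0 : L ≤ 0 := by
    rw [hL] at hL0
    exact_mod_cast hL0
  have hLSup : LSup Q p = (L : EReal) := by
    rw [LSup]
    refine le_antisymm (iSup₂_le (fun q hq => (hmax q hq).trans_eq hL)) ?_
    rw [← hL]
    exact le_iSup₂ (f := fun q (_ : q ∈ Q) => Ldiv q p) qhat hqhatQ
  -- separation constant
  obtain ⟨c, hcL, hcsep⟩ := separation hQsub hQcomp hp hqhatQ hmax huniq hL hε
  have hc0 : c < 0 := lt_of_lt_of_le hcL hLle0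
  set g : ℝ := (L - c)/2 with hg
  have hgpos : 0 < g := by rw [hg]; linarith
  set M : ℝ := (L + c)/2 with hM
  -- the perturbation parameter
  set η : ℝ := min (1/2) (g/(|c|+1)) with hηdef
  have habs : 0 < |c| + 1 := by positivity
  have hη0 : 0 < η := lt_min (by norm_num) (by positivity)
  have hη1 : η < 1 := lt_of_le_of_lt (min_le_left _ _) (by norm_num)
  have hηcM : (1-η)*c ≤ M := by
    have h1 : η ≤ g/(|c|+1) := min_le_right _ _
    have h2 : η * (|c|+1) ≤ g := (le_div_iff₀ habs).1 h1
    have h3 : η * (-c) ≤ η * (|c|+1) :=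
      mul_le_mul_of_nonneg_left (by rw [abs_of_neg hc0]; linarith) hη0.le
    have h4 : η * (-c) ≤ g := le_trans h3 h2
    rw [hM, hg] at *
    nlinarith
  -- eventual facts
  have hev1 : ∀ᶠ n in Filter.atTop, ∀ x, p x ≠ 0 → (1-η) * p x ≤ ν n x := by
    rw [Filter.eventually_all]
    intro x
    by_cases hpx : p x = 0
    · exact Filter.Eventually.of_forall (fun n h => absurd hpx h)
    · have hpxpos : 0 < p x := lt_of_le_of_ne (hp.1 x) (Ne.symm hpx)
      have hδ : (0:ℝ) < η * p x / 2 := by positivity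
      have hevtv : ∀ᶠ n in Filter.atTop, tv (ν n) p < η * p x / 2 :=
        hconv (Iio_mem_nhds hδ)
      refine hevtv.mono (fun n htv _ => ?_)
      have h1 : |ν n x - p x| ≤ ∑ y, |ν n y - p y| :=
        Finset.single_le_sum (f := fun y => |ν n y - p y|)
          (fun y _ => abs_nonneg _) (Finset.mem_univ x)
      have h2 : |ν n x - p x| ≤ 2 * tv (ν n) p := by
        rw [tv]; linarith
      have h3 : p x - ν n x ≤ |ν n x - p x| := by
        rw [abs_sub_comm]; exact le_abs_self _
      nlinarith
  have hrealize' : Filter.Tendsto (fun n : ℕ => LSup (Q ∩ Rn X n) (ν n))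
      Filter.atTop (nhds ((L : ℝ) : EReal)) := by rwa [hLSup] at hrealize
  have hev2 : ∀ᶠ n in Filter.atTop, (↑(L - g/4) : EReal) < LSup (Q ∩ Rn X n) (ν n) :=
    hrealize'.eventually (lt_mem_nhds (by exact_mod_cast (by linarith : L - g/4 < L)))
  have hev3 : ∀ᶠ n in Filter.atTop, 1 ≤ n := Filter.eventually_ge_atTop 1
  -- bound sequence
  set B : ℕ → ℝ := fun n => ((n:ℝ)+1)^m * Real.exp (-(3*g/4 * n)) with hB
  have hBtend : Filter.Tendsto B Filter.atTop (nhds 0) :=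
    poly_exp_tendsto m (by linarith)
  -- the main eventual estimate
  have key : ∀ᶠ n in Filter.atTop,
      1 - B n ≤ post n (ν n) (tvBall qhat ε ∩ Q) / post n (ν n) Q ∧
      post n (ν n) (tvBall qhat ε ∩ Q) / post n (ν n) Q ≤ 1 := by
    refine ((hev1.and hev2).and hev3).mono ?_
    rintro n ⟨⟨hlow, hLS⟩, hn1⟩
    have hνn : ν n ∈ Rn X n := hν n hn1
    have hνnn : ∀ x, 0 ≤ ν n x := hνn.1.1
    set A : Set (X → ℝ) := tvBall qhat ε ∩ Q with hA
    have hS1 : A ∩ Rn X n ⊆ Rn X n := Set.inter_subset_right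
    have hS2 : Q ∩ Rn X n ⊆ Rn X n := Set.inter_subset_right
    set f := typeProb n (ν n) with hf
    set T1 := (sub_finite hn1 hS1).toFinset with hT1
    set T2 := (sub_finite hn1 hS2).toFinset with hT2
    set TR := (sub_finite hn1 (Set.Subset.rfl : Rn X n ⊆ Rn X n)).toFinset with hTR
    have hfnn : ∀ q ∈ Rn X n, 0 ≤ f q := fun q hq => typeProb_nonneg n (ν n) q hq.1.1
    -- the good type
    obtain ⟨qs, hqsS2, hqs⟩ : ∃ qs, qs ∈ Q ∩ Rn X n ∧ (↑(L - g/4) : EReal) < Ldiv qs (ν n) := by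
      rw [LSup, lt_iSup_iff] at hLS
      obtain ⟨q, hq⟩ := hLS
      rw [lt_iSup_iff] at hq
      obtain ⟨hmem, hlt⟩ := hq
      exact ⟨q, hmem, hlt⟩
    have hD1 : Real.exp ((n:ℝ) * (L - g/4)) ≤ f qs :=
      typeProb_ge hqsS2.2.1.1 hqs.le
    have hDge : Real.exp ((n:ℝ) * (L - g/4)) ≤ ∑ q ∈ T2, f q := by
      refine le_trans hD1 (Finset.single_le_sum (fun q hq => hfnn q ?_) ?_)
      · exact hS2 ((sub_finite hn1 hS2).mem_toFinset.1 hq)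
      · exact (sub_finite hn1 hS2).mem_toFinset.2 hqsS2
    have hDpos : 0 < ∑ q ∈ T2, f q := lt_of_lt_of_le (Real.exp_pos _) hDge
    have hT2TR : T2 ⊆ TR := by
      intro q hq
      exact (sub_finite hn1 (Set.Subset.rfl : Rn X n ⊆ Rn X n)).mem_toFinset.2
        (hS2 ((sub_finite hn1 hS2).mem_toFinset.1 hq))
    have hRge : ∑ q ∈ T2, f q ≤ ∑ q ∈ TR, f q :=
      Finset.sum_le_sum_of_subset_of_nonneg hT2TR
        (fun q hq _ => hfnn q
          ((sub_finite hn1 (Set.Subset.rfl : Rn X n ⊆ Rn X n)).mem_toFinset.1 hq))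
    have hRpos : 0 < ∑ q ∈ TR, f q := lt_of_lt_of_le hDpos hRge
    -- ratio rewrite
    have hpost : post n (ν n) A / post n (ν n) Q = (∑ q ∈ T1, f q) / (∑ q ∈ T2, f q) := by
      rw [post, post, tsum_finite hn1 hS1 f, tsum_finite hn1 hS2 f,
        tsum_finite hn1 (Set.Subset.rfl : Rn X n ⊆ Rn X n) f]
      exact div_div_div_cancel_right₀ (ne_of_gt hRpos) _ _
    -- splitting
    have hT1eq : T2.filter (fun q => q ∈ A) = T1 := by
      ext q
      rw [hT1, hT2]
      simp only [Finset.mem_filter, Set.Finite.mem_toFinset, Set.mem_inter_iff]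
      constructor
      · rintro ⟨⟨hq1, hq2⟩, hq3⟩
        exact ⟨hq3, hq2⟩
      · rintro ⟨hq3, hq2⟩
        exact ⟨⟨hq3.2, hq2⟩, hq3⟩
    have hsplit : ∑ q ∈ T2, f q = ∑ q ∈ T1, f q + ∑ q ∈ T2.filter (fun q => q ∉ A), f q := by
      rw [← hT1eq]
      exact (Finset.sum_filter_add_sum_filter_not T2 (fun q => q ∈ A) f).symm
    -- bound the outside sum
    have hout : ∑ q ∈ T2.filter (fun q => q ∉ A), f q ≤ ((n:ℝ)+1)^m * Real.exp ((n:ℝ) * M) := by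
      have hterm : ∀ q ∈ T2.filter (fun q => q ∉ A), f q ≤ Real.exp ((n:ℝ) * M) := by
        intro q hq
        rw [Finset.mem_filter, Set.Finite.mem_toFinset] at hq
        obtain ⟨⟨hqQ, hqRn⟩, hqnA⟩ := hq
        have hqpmf : q ∈ pmfSet X := hQsub hqQ
        have htvq : ε ≤ tv q qhat := by
          by_contra hlt
          push_neg at hlt
          exact hqnA ⟨⟨hqpmf, hlt.le⟩, hqQ⟩
        have hsep := hcsep q hqQ htvq
        have hpert := ldiv_perturb hp hνnn hqpmf hη0.le hη1 hlow hsep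
        have hMle : Ldiv q (ν n) ≤ (M : EReal) :=
          le_trans hpert (by exact_mod_cast hηcM)
        exact typeProb_le hn1 hνnn hqpmf.1 hMle
      calc ∑ q ∈ T2.filter (fun q => q ∉ A), f q
          ≤ (T2.filter (fun q => q ∉ A)).card • Real.exp ((n:ℝ) * M) :=
            Finset.sum_le_card_nsmul _ _ _ hterm
      _ = ((T2.filter (fun q => q ∉ A)).card : ℝ) * Real.exp ((n:ℝ) * M) := by
            rw [nsmul_eq_mul]
      _ ≤ ((n:ℝ)+1)^m * Real.exp ((n:ℝ) * M) := by
            refine mul_le_mul_of_nonneg_right ?_ (Real.exp_pos _).le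
            calc ((T2.filter (fun q => q ∉ A)).card : ℝ) ≤ (T2.card : ℝ) :=
                  Nat.cast_le.2 (Finset.card_filter_le _ _)
            _ ≤ ((n:ℝ)+1)^m := by
                  have := card_le hn1 hS2
                  rw [hm]
                  exact_mod_cast this
    -- outside ratio bound
    have hratio_out : (∑ q ∈ T2.filter (fun q => q ∉ A), f q) / (∑ q ∈ T2, f q) ≤ B n := by
      have h1 : (∑ q ∈ T2.filter (fun q => q ∉ A), f q) / (∑ q ∈ T2, f q)
          ≤ (((n:ℝ)+1)^m * Real.exp ((n:ℝ) * M)) / Real.exp ((n:ℝ) * (L - g/4)) :=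
        div_le_div₀ (by positivity) hout (Real.exp_pos _) hDge
      refine le_trans h1 ?_
      rw [hB]
      rw [mul_div_assoc, ← Real.exp_sub]
      have he : (n:ℝ) * M - (n:ℝ) * (L - g/4) = -(3*g/4 * n) := by
        rw [hM, hg]
        ring
      rw [he]
    constructor
    · rw [hpost]
      have h1 : (∑ q ∈ T1, f q) / (∑ q ∈ T2, f q)
          = 1 - (∑ q ∈ T2.filter (fun q => q ∉ A), f q) / (∑ q ∈ T2, f q) := by
        field_simp
        linarith [hsplit]
      rw [h1]
      linarith [hratio_out]
    · rw [hpost]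
      rw [div_le_one hDpos]
      have h2 : 0 ≤ ∑ q ∈ T2.filter (fun q => q ∉ A), f q :=
        Finset.sum_nonneg (fun q hq => hfnn q
          (hS2 ((sub_finite hn1 hS2).mem_toFinset.1 (Finset.mem_filter.1 hq).1)))
      linarith [hsplit]
  -- squeeze
  have hlowt : Filter.Tendsto (fun n => 1 - B n) Filter.atTop (nhds 1) := by
    have h := (tendsto_const_nhds (x := (1:ℝ)) (f := Filter.atTop (α := ℕ))).sub hBtend
    simpa using h
  exact tendsto_of_tendsto_of_tendsto_of_le_of_le' hlowt tendsto_const_nhds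
    (key.mono (fun n h => h.1)) (key.mono (fun n h => h.2))
end
end

section
/- L-projection on a linear family belongs to the Λ-family: Let L(u,a) be a nonempty linear family and let p ∈ P(X) satisfy S(p) = S(L(u,a)). Then p has a unique L-projection q̂ on L(u,a) (a unique maximizer of q ↦ L(q‖p) over L(u,a)), and there exists θ ∈ ℝ^k such that for every x ∈ S(p), 1 − Σ_{j=1}^k θ_j·(u_j(x) − a_j) > 0 and q̂(x) = p(x)·[1 − Σ_{j=1}^k θ_j·(u_j(x) − a_j)]^{-1}, while q̂(x) = 0 for x ∉ S(p). -/
open scoped BigOperators Classical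
open Filter Topology

noncomputable section

private lemma erealCoeSum {ι : Type*} (s : Finset ι) (f : ι → ℝ) :
    ((∑ i ∈ s, f i : ℝ) : EReal) = ∑ i ∈ s, ((f i : ℝ) : EReal) := by
  induction s using Finset.cons_induction with
  | empty => simp
  | cons x s hx ih => simp only [Finset.sum_cons, EReal.coe_add, ih]

private lemma erealSumEqBot {ι : Type*} (s : Finset ι) (f : ι → EReal) {x : ι}
    (hx : x ∈ s) (h : f x = ⊥) : ∑ i ∈ s, f i = ⊥ := by
  rw [← Finset.add_sum_erase _ _ hx, h, EReal.bot_add]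

/-- The L-projection on a linear family exists, is unique, and
belongs to the Λ-family. -/
theorem Lprojection_on_linear_family {X : Type*} [Fintype X] [Nonempty X] {k : ℕ}
    (u : Fin k → X → ℝ) (a : Fin k → ℝ) (hne : (linFam u a).Nonempty)
    (p : X → ℝ) (hp : p ∈ pmfSet X)
    (hsupp : ∀ x, 0 < p x ↔ ∃ q ∈ linFam u a, 0 < q x) :
    ∃ qhat ∈ linFam u a,
      (∀ q ∈ linFam u a, Ldiv q p ≤ Ldiv qhat p) ∧
      (∀ q ∈ linFam u a, (∀ q' ∈ linFam u a, Ldiv q' p ≤ Ldiv q p) → q = qhat) ∧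
      ∃ θ : Fin k → ℝ,
        (∀ x, 0 < p x →
          0 < 1 - ∑ j, θ j * (u j x - a j) ∧
          qhat x = p x * (1 - ∑ j, θ j * (u j x - a j))⁻¹) ∧
        (∀ x, ¬ 0 < p x → qhat x = 0) := by
  classical
  obtain ⟨hp0, hp1⟩ := hp
  have hCsupp : ∀ q ∈ linFam u a, ∀ x, ¬ 0 < p x → q x = 0 := by
    intro q hq x hx
    by_contra h
    exact hx ((hsupp x).2 ⟨q, hq, lt_of_le_of_ne (hq.1.1 x) (Ne.symm h)⟩)
  set T : Finset X := Finset.univ.filter (fun x => 0 < p x) with hTdef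
  have hmemT : ∀ x, x ∈ T ↔ 0 < p x := by
    intro x; simp [hTdef]
  have hT : T.Nonempty := by
    obtain ⟨x, _, hx⟩ := Finset.exists_ne_zero_of_sum_ne_zero
      (by rw [hp1]; norm_num : ∑ x, p x ≠ 0)
    exact ⟨x, (hmemT x).2 (lt_of_le_of_ne (hp0 x) (Ne.symm hx))⟩
  have hsumT : ∀ f : X → ℝ, (∀ x, ¬ 0 < p x → f x = 0) → ∑ x ∈ T, f x = ∑ x, f x := by
    intro f hf
    apply Finset.sum_subset (Finset.subset_univ T)
    intro x _ hx
    exact hf x (fun h => hx ((hmemT x).2 h))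
  obtain ⟨q0, hq0⟩ := hne
  have hex : ∀ x : X, ∃ q, q ∈ linFam u a ∧ (0 < p x → 0 < q x) := by
    intro x
    by_cases hx : 0 < p x
    · obtain ⟨q, hq, hqx⟩ := (hsupp x).1 hx
      exact ⟨q, hq, fun _ => hqx⟩
    · exact ⟨q0, hq0, fun h => absurd h hx⟩
  choose qf hqfC hqfpos using hex
  have hcard : (0:ℝ) < T.card := by exact_mod_cast Finset.card_pos.2 hT
  set qs : X → ℝ := fun y => (T.card : ℝ)⁻¹ * ∑ x ∈ T, qf x y with hqsdef
  have hqs_nonneg : ∀ y, 0 ≤ qs y := fun y =>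
    mul_nonneg (inv_nonneg.2 hcard.le) (Finset.sum_nonneg fun x _ => (hqfC x).1.1 y)
  have hqsC : qs ∈ linFam u a := by
    refine ⟨⟨hqs_nonneg, ?_⟩, ?_⟩
    · calc ∑ y, qs y = (T.card:ℝ)⁻¹ * ∑ x ∈ T, ∑ y, qf x y := by
            rw [← Finset.mul_sum, Finset.sum_comm]
        _ = 1 := by
            rw [Finset.sum_congr rfl (fun x _ => (hqfC x).1.2), Finset.sum_const,
              nsmul_eq_mul, mul_one, inv_mul_cancel₀ hcard.ne']
    · intro j
      have h1 : ∑ y, qs y * u j y = (T.card:ℝ)⁻¹ * ∑ x ∈ T, ∑ y, qf x y * u j y := by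
        simp only [hqsdef, mul_assoc, Finset.sum_mul]
        rw [← Finset.mul_sum, Finset.sum_comm]
      rw [h1, Finset.sum_congr rfl (fun x _ => (hqfC x).2 j), Finset.sum_const,
        nsmul_eq_mul, ← mul_assoc, inv_mul_cancel₀ hcard.ne', one_mul]
  have hqs_pos : ∀ x, 0 < p x → 0 < qs x := by
    intro x hx
    have hxT : x ∈ T := (hmemT x).2 hx
    have h2 : 0 < ∑ y ∈ T, qf y x :=
      lt_of_lt_of_le (hqfpos x hx) (Finset.single_le_sum (fun y _ => (hqfC y).1.1 x) hxT)
    exact mul_pos (inv_pos.2 hcard) h2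
  set F : (X → ℝ) → ℝ := fun q => ∑ x, p x * Real.log (q x) with hFdef
  set B : ℝ := F qs with hBdef
  set δ : ℝ := T.inf' hT (fun x => min (Real.exp (B / p x)) (qs x)) with hδdef
  have hδpos : 0 < δ := by
    rw [hδdef, Finset.lt_inf'_iff]
    intro x hx
    exact lt_min (Real.exp_pos _) (hqs_pos x ((hmemT x).1 hx))
  have hδle : ∀ x, 0 < p x → δ ≤ Real.exp (B / p x) :=
    fun x hx => (Finset.inf'_le _ ((hmemT x).2 hx)).trans (min_le_left _ _)
  set K : Set (X → ℝ) := linFam u a ∩ {q | ∀ x, 0 < p x → δ ≤ q x} with hKdef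
  have hqsK : qs ∈ K :=
    ⟨hqsC, fun x hx => (Finset.inf'_le _ ((hmemT x).2 hx)).trans (min_le_right _ _)⟩
  have hKclosed : IsClosed K := by
    have hK' : K = ((⋂ x, {q : X → ℝ | 0 ≤ q x}) ∩ ({q : X → ℝ | ∑ x, q x = 1}) ∩
        (⋂ j, {q : X → ℝ | ∑ x, q x * u j x = a j})) ∩
        (⋂ x, {q : X → ℝ | 0 < p x → δ ≤ q x}) := by
      ext q
      simp only [hKdef, linFam, pmfSet, Set.mem_inter_iff, Set.mem_setOf_eq, Set.mem_iInter]
      try tauto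
    rw [hK']
    refine (((isClosed_iInter fun x => ?_).inter ?_).inter (isClosed_iInter fun j => ?_)).inter
      (isClosed_iInter fun x => ?_)
    · exact isClosed_le continuous_const (continuous_apply x)
    · exact isClosed_eq (continuous_finset_sum _ fun x _ => continuous_apply x) continuous_const
    · exact isClosed_eq
        (continuous_finset_sum _ fun x _ => (continuous_apply x).mul continuous_const)
        continuous_const
    · by_cases hx : 0 < p x
      · have h2 : {q : X → ℝ | 0 < p x → δ ≤ q x} = {q : X → ℝ | δ ≤ q x} := by
          ext q; simp [hx]
        rw [h2]; exact isClosed_le continuous_const (continuous_apply x)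
      · have h2 : {q : X → ℝ | 0 < p x → δ ≤ q x} = Set.univ := by
          ext q; simp [hx]
        rw [h2]; exact isClosed_univ
  have hKcompact : IsCompact K := by
    apply IsCompact.of_isClosed_subset
      (isCompact_univ_pi fun _ : X => isCompact_Icc (a := (0:ℝ)) (b := 1)) hKclosed
    intro q hq
    rw [Set.mem_univ_pi]
    intro x
    refine ⟨hq.1.1.1 x, ?_⟩
    rw [← hq.1.1.2]
    exact Finset.single_le_sum (fun y _ => hq.1.1.1 y) (Finset.mem_univ x)
  have hFcont : ContinuousOn F K := by
    rw [hFdef]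
    apply continuousOn_finset_sum
    intro x _
    by_cases hx : 0 < p x
    · exact continuousOn_const.mul (((continuous_apply x).continuousOn).log
        (fun q hq => (lt_of_lt_of_le hδpos (hq.2 x hx)).ne'))
    · have hx0 : p x = 0 := le_antisymm (not_lt.1 hx) (hp0 x)
      have h2 : Set.EqOn (fun q : X → ℝ => p x * Real.log (q x)) (fun _ => (0:ℝ)) K := by
        intro q _
        simp [hx0]
      exact (continuousOn_const (c := (0:ℝ))).congr h2
  obtain ⟨qh, hqhK, hqhmax⟩ := hKcompact.exists_isMaxOn ⟨qs, hqsK⟩ hFcont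
  have hqhC : qh ∈ linFam u a := hqhK.1
  have hqh_pos : ∀ x, 0 < p x → 0 < qh x := fun x hx => lt_of_lt_of_le hδpos (hqhK.2 x hx)
  have hqh_zero : ∀ x, ¬ 0 < p x → qh x = 0 := hCsupp qh hqhC
  have hBF : B ≤ F qh := hqhmax hqsK
  have hFle : ∀ q ∈ linFam u a, (∀ x, 0 < p x → 0 < q x) → F q ≤ F qh := by
    intro q hq hqpos
    by_cases hqK : q ∈ K
    · exact hqhmax hqK
    simp only [hKdef, Set.mem_inter_iff, Set.mem_setOf_eq, not_and, not_forall, not_le] at hqK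
    obtain ⟨x, hpx, hqx⟩ := hqK hq
    have hterm : ∀ y, p y * Real.log (q y) ≤ 0 := by
      intro y
      have h1 : q y ≤ 1 := by
        rw [← hq.1.2]; exact Finset.single_le_sum (fun z _ => hq.1.1 z) (Finset.mem_univ y)
      exact mul_nonpos_iff.2 (Or.inl ⟨hp0 y, Real.log_nonpos (hq.1.1 y) h1⟩)
    have hFq : F q ≤ p x * Real.log (q x) := by
      calc F q = p x * Real.log (q x) + ∑ y ∈ Finset.univ.erase x, p y * Real.log (q y) :=
            (Finset.add_sum_erase _ _ (Finset.mem_univ x)).symm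
        _ ≤ p x * Real.log (q x) + 0 :=
            add_le_add (le_refl _) (Finset.sum_nonpos fun y _ => hterm y)
        _ = p x * Real.log (q x) := add_zero _
    have hlt : p x * Real.log (q x) < B := by
      have h2 : Real.log (q x) < B / p x := by
        have h3 := Real.log_lt_log (hqpos x hpx) (lt_of_lt_of_le hqx (hδle x hpx))
        rwa [Real.log_exp] at h3
      calc p x * Real.log (q x) < p x * (B / p x) := mul_lt_mul_of_pos_left h2 hpx
        _ = B := by field_simp
    linarith
  have hLdiv_coe : ∀ q : X → ℝ, (∀ x, 0 < p x → 0 < q x) →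
      Ldiv q p = ((F q : ℝ) : EReal) := by
    intro q hq
    rw [hFdef]
    simp only [Ldiv]
    rw [erealCoeSum]
    apply Finset.sum_congr rfl
    intro x _
    by_cases hx : p x = 0
    · simp [hx]
    · have hpx : 0 < p x := lt_of_le_of_ne (hp0 x) (Ne.symm hx)
      rw [if_neg hx, if_neg (ne_of_gt (hq x hpx))]
  have hLdiv_bot : ∀ q : X → ℝ, ∀ x, 0 < p x → q x = 0 → Ldiv q p = ⊥ := by
    intro q x hx hqx
    apply erealSumEqBot _ _ (Finset.mem_univ x)
    rw [if_neg (ne_of_gt hx), if_pos hqx]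
  have hmax : ∀ q ∈ linFam u a, Ldiv q p ≤ Ldiv qh p := by
    intro q hq
    by_cases hqpos : ∀ x, 0 < p x → 0 < q x
    · rw [hLdiv_coe q hqpos, hLdiv_coe qh hqh_pos]
      exact_mod_cast hFle q hq hqpos
    · push_neg at hqpos
      obtain ⟨x, hpx, hqx⟩ := hqpos
      rw [hLdiv_bot q x hpx (le_antisymm hqx (hq.1.1 x))]
      exact bot_le
  have huniq : ∀ q ∈ linFam u a, (∀ q' ∈ linFam u a, Ldiv q' p ≤ Ldiv q p) → q = qh := by
    intro q hq hqm
    have hqpos : ∀ x, 0 < p x → 0 < q x := by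
      intro x hpx
      by_contra h
      have hq0 : q x = 0 := le_antisymm (not_lt.1 h) (hq.1.1 x)
      have h1 := hqm qh hqhC
      rw [hLdiv_bot q x hpx hq0, hLdiv_coe qh hqh_pos] at h1
      exact (EReal.bot_lt_coe _).not_ge h1
    have hFeq : F q = F qh := by
      have h1 := hqm qh hqhC
      have h2 := hmax q hq
      rw [hLdiv_coe q hqpos, hLdiv_coe qh hqh_pos] at h1 h2
      exact_mod_cast le_antisymm h2 h1
    by_contra hne'
    obtain ⟨x₀, hx₀⟩ : ∃ x, q x ≠ qh x := Function.ne_iff.1 hne'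
    have hpx₀ : 0 < p x₀ := by
      by_contra h
      rw [hCsupp q hq x₀ h, hqh_zero x₀ h] at hx₀
      exact hx₀ rfl
    set m : X → ℝ := fun x => (q x + qh x) / 2 with hmdef
    have hmC : m ∈ linFam u a := by
      refine ⟨⟨fun x => by
        have := hq.1.1 x; have := hqhC.1.1 x
        simp only [hmdef]; linarith, ?_⟩, ?_⟩
      · have h1 : ∑ x, m x = (∑ x, q x + ∑ x, qh x) / 2 := by
          simp only [hmdef]
          rw [← Finset.sum_add_distrib, Finset.sum_div]
        rw [h1, hq.1.2, hqhC.1.2]; norm_num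
      · intro j
        have h1 : ∑ x, m x * u j x = (∑ x, q x * u j x + ∑ x, qh x * u j x) / 2 := by
          simp only [hmdef]
          rw [← Finset.sum_add_distrib, Finset.sum_div]
          exact Finset.sum_congr rfl fun x _ => by ring
        rw [h1, hq.2 j, hqhC.2 j]; ring
    have hmpos : ∀ x, 0 < p x → 0 < m x := by
      intro x hx
      have := hqpos x hx; have := hqh_pos x hx
      simp only [hmdef]; linarith
    have hlog2 : ∀ b c : ℝ, 0 < b → 0 < c →
        Real.log b / 2 + Real.log c / 2 ≤ Real.log ((b + c) / 2) := by
      intro b c hb hc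
      have h2 := (strictConcaveOn_log_Ioi.concaveOn).2 (Set.mem_Ioi.2 hb) (Set.mem_Ioi.2 hc)
        (by norm_num : (0:ℝ) ≤ 1/2) (by norm_num : (0:ℝ) ≤ 1/2) (by norm_num)
      simp only [smul_eq_mul] at h2
      calc Real.log b / 2 + Real.log c / 2 = 1/2 * Real.log b + 1/2 * Real.log c := by ring
        _ ≤ Real.log (1/2 * b + 1/2 * c) := h2
        _ = Real.log ((b + c) / 2) := by ring_nf
    have hlog2' : ∀ b c : ℝ, 0 < b → 0 < c → b ≠ c →
        Real.log b / 2 + Real.log c / 2 < Real.log ((b + c) / 2) := by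
      intro b c hb hc hbc
      have h2 := strictConcaveOn_log_Ioi.2 (Set.mem_Ioi.2 hb) (Set.mem_Ioi.2 hc) hbc
        (by norm_num : (0:ℝ) < 1/2) (by norm_num : (0:ℝ) < 1/2) (by norm_num)
      simp only [smul_eq_mul] at h2
      calc Real.log b / 2 + Real.log c / 2 = 1/2 * Real.log b + 1/2 * Real.log c := by ring
        _ < Real.log (1/2 * b + 1/2 * c) := h2
        _ = Real.log ((b + c) / 2) := by ring_nf
    have hterm_le : ∀ x, p x * Real.log (q x) / 2 + p x * Real.log (qh x) / 2 ≤
        p x * Real.log (m x) := by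
      intro x
      by_cases hx : 0 < p x
      · have h := hlog2 (q x) (qh x) (hqpos x hx) (hqh_pos x hx)
        have h2 := mul_le_mul_of_nonneg_left h (hp0 x)
        calc p x * Real.log (q x) / 2 + p x * Real.log (qh x) / 2
            = p x * (Real.log (q x) / 2 + Real.log (qh x) / 2) := by ring
          _ ≤ p x * Real.log ((q x + qh x) / 2) := h2
          _ = p x * Real.log (m x) := by rw [hmdef]
      · have hx0 : p x = 0 := le_antisymm (not_lt.1 hx) (hp0 x)
        simp [hx0]
    have hterm_lt : p x₀ * Real.log (q x₀) / 2 + p x₀ * Real.log (qh x₀) / 2 <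
        p x₀ * Real.log (m x₀) := by
      have h := hlog2' (q x₀) (qh x₀) (hqpos x₀ hpx₀) (hqh_pos x₀ hpx₀) hx₀
      have h2 := mul_lt_mul_of_pos_left h hpx₀
      calc p x₀ * Real.log (q x₀) / 2 + p x₀ * Real.log (qh x₀) / 2
          = p x₀ * (Real.log (q x₀) / 2 + Real.log (qh x₀) / 2) := by ring
        _ < p x₀ * Real.log ((q x₀ + qh x₀) / 2) := h2
        _ = p x₀ * Real.log (m x₀) := by rw [hmdef]
    have hsumlt := Finset.sum_lt_sum (fun x (_ : x ∈ Finset.univ) => hterm_le x)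
      ⟨x₀, Finset.mem_univ x₀, hterm_lt⟩
    have hL : ∑ x, (p x * Real.log (q x) / 2 + p x * Real.log (qh x) / 2) = F qh := by
      rw [Finset.sum_add_distrib, ← Finset.sum_div, ← Finset.sum_div]
      have e1 : ∑ x, p x * Real.log (q x) = F q := by rw [hFdef]
      have e2 : ∑ x, p x * Real.log (qh x) = F qh := by rw [hFdef]
      rw [e1, e2, hFeq]; ring
    have hFm : F qh < F m := by
      rw [← hL]
      exact hsumlt
    have h2 := hmax m hmC
    rw [hLdiv_coe m hmpos, hLdiv_coe qh hqh_pos] at h2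
    have h3 : F m ≤ F qh := by exact_mod_cast h2
    linarith
  -- the Lagrange multipliers
  set w : Fin (k+1) → EuclideanSpace ℝ X :=
    fun i => WithLp.toLp 2 (fun x => if 0 < p x then (Fin.cases 1 (fun j => u j x) i : ℝ) else 0) with hwdef
  set v : EuclideanSpace ℝ X := WithLp.toLp 2 (fun x => if 0 < p x then p x / qh x else 0) with hvdef
  have hv : v ∈ Submodule.span ℝ (Set.range w) := by
    rw [← Submodule.orthogonal_orthogonal (Submodule.span ℝ (Set.range w)),
      Submodule.mem_orthogonal]
    intro d hd
    have hwd : ∀ i, (inner ℝ (w i) d : ℝ) = 0 :=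
      fun i => hd (w i) (Submodule.subset_span (Set.mem_range_self i))
    set d' : X → ℝ := fun x => if 0 < p x then d x else 0 with hd'def
    have hd'zero : ∀ x, ¬ 0 < p x → d' x = 0 := by
      intro x hx; simp [hd'def, hx]
    have hd'sum : ∑ x, d' x = 0 := by
      have h0 := hwd 0
      simp only [PiLp.inner_apply, RCLike.inner_apply, conj_trivial, hwdef,
        Fin.cases_zero] at h0
      rw [← h0]
      apply Finset.sum_congr rfl
      intro x _
      by_cases hx : 0 < p x <;> simp [hd'def, hx]
    have hd'u : ∀ j, ∑ x, d' x * u j x = 0 := by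
      intro j
      have h0 := hwd j.succ
      simp only [PiLp.inner_apply, RCLike.inner_apply, conj_trivial, hwdef,
        Fin.cases_succ] at h0
      rw [← h0]
      apply Finset.sum_congr rfl
      intro x _
      by_cases hx : 0 < p x <;> simp [hd'def, hx, mul_comm]
    set ε : ℝ := T.inf' hT (fun x => qh x / (|d' x| + 1)) with hεdef
    have hεpos : 0 < ε := by
      rw [hεdef, Finset.lt_inf'_iff]
      intro x hx
      exact div_pos (hqh_pos x ((hmemT x).1 hx)) (by positivity)
    have hqt_pos : ∀ t : ℝ, |t| < ε → ∀ x, 0 < p x → 0 < qh x + t * d' x := by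
      intro t ht x hx
      have h1 : ε ≤ qh x / (|d' x| + 1) := Finset.inf'_le _ ((hmemT x).2 hx)
      have h2 : |t| * (|d' x| + 1) < qh x := by
        rw [← lt_div_iff₀ (by positivity : (0:ℝ) < |d' x| + 1)]
        exact ht.trans_le h1
      have h3 : |t * d' x| ≤ |t| * (|d' x| + 1) := by
        rw [abs_mul]
        nlinarith [abs_nonneg t, abs_nonneg (d' x)]
      nlinarith [neg_abs_le (t * d' x)]
    have hqtC : ∀ t : ℝ, |t| < ε → (fun x => qh x + t * d' x) ∈ linFam u a := by
      intro t ht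
      refine ⟨⟨?_, ?_⟩, ?_⟩
      · intro x
        show 0 ≤ qh x + t * d' x
        by_cases hx : 0 < p x
        · exact (hqt_pos t ht x hx).le
        · rw [hqh_zero x hx, hd'zero x hx, mul_zero, add_zero]
      · show ∑ x, (qh x + t * d' x) = 1
        rw [Finset.sum_add_distrib, hqhC.1.2, ← Finset.mul_sum, hd'sum, mul_zero, add_zero]
      · intro j
        show ∑ x, (qh x + t * d' x) * u j x = a j
        have e1 : ∀ x, (qh x + t * d' x) * u j x = qh x * u j x + t * (d' x * u j x) :=
          fun x => by ring
        rw [Finset.sum_congr rfl fun x _ => e1 x, Finset.sum_add_distrib, hqhC.2 j,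
          ← Finset.mul_sum, hd'u j, mul_zero, add_zero]
    set g : ℝ → ℝ := fun t => ∑ x, p x * Real.log (qh x + t * d' x) with hgdef
    have hgmax : IsLocalMax g 0 := by
      filter_upwards [Ioo_mem_nhds (neg_lt_zero.2 hεpos) hεpos] with t ht
      have habs : |t| < ε := abs_lt.2 ⟨ht.1, ht.2⟩
      have h1 : F (fun x => qh x + t * d' x) ≤ F qh := hFle _ (hqtC t habs) (hqt_pos t habs)
      have h2 : g 0 = F qh := by simp only [hgdef, hFdef, zero_mul, add_zero]
      have h3 : g t = F (fun x => qh x + t * d' x) := by simp only [hgdef, hFdef]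
      rw [h2, h3]; exact h1
    have hderiv : HasDerivAt g (∑ x, p x * (d' x / qh x)) 0 := by
      rw [hgdef]
      refine HasDerivAt.fun_sum fun x _ => ?_
      by_cases hx : 0 < p x
      · have hq : 0 < qh x := hqh_pos x hx
        have h1 : HasDerivAt (fun t : ℝ => qh x + t * d' x) (d' x) 0 := by
          simpa using ((hasDerivAt_id (0:ℝ)).mul_const (d' x)).const_add (qh x)
        have h2 : HasDerivAt (fun t : ℝ => Real.log (qh x + t * d' x))
            ((qh x + 0 * d' x)⁻¹ * d' x) 0 :=
          (Real.hasDerivAt_log (by simpa using hq.ne')).comp 0 h1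
        have h3 := h2.const_mul (p x)
        refine h3.congr_deriv ?_
        simp only [zero_mul, add_zero]
        ring
      · have hx0 : p x = 0 := le_antisymm (not_lt.1 hx) (hp0 x)
        simp only [hx0, zero_mul]
        exact hasDerivAt_const 0 0
    have hzero : ∑ x, p x * (d' x / qh x) = 0 := hgmax.hasDerivAt_eq_zero hderiv
    have h9 : (inner ℝ d v : ℝ) = ∑ x, p x * (d' x / qh x) := by
      simp only [PiLp.inner_apply, RCLike.inner_apply, conj_trivial, hvdef]
      apply Finset.sum_congr rfl
      intro x _
      by_cases hx : 0 < p x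
      · simp only [hd'def, if_pos hx]
        ring
      · have hx0 : p x = 0 := le_antisymm (not_lt.1 hx) (hp0 x)
        simp [hd'def, hx, hx0]
    exact h9.trans hzero
  rw [Submodule.mem_span_range_iff_exists_fun] at hv
  obtain ⟨co, hco⟩ := hv
  have hcx : ∀ x, 0 < p x → co 0 + ∑ j, co j.succ * u j x = p x / qh x := by
    intro x hx
    have h1 : (∑ i, co i • w i) x = v x := by rw [hco]
    rw [WithLp.ofLp_sum, Finset.sum_apply] at h1
    simp only [PiLp.smul_apply, Pi.smul_apply, smul_eq_mul, hwdef, hvdef, PiLp.toLp_apply, if_pos hx,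
      Fin.sum_univ_succ, Fin.cases_zero, Fin.cases_succ, mul_one] at h1
    exact h1
  have hsump : ∑ x ∈ T, p x = 1 := by
    rw [hsumT p (fun x hx => le_antisymm (not_lt.1 hx) (hp0 x))]
    exact hp1
  have hqh1 : ∑ x ∈ T, qh x = 1 := by
    rw [hsumT qh hqh_zero]; exact hqhC.1.2
  have hqhu : ∀ j, ∑ x ∈ T, qh x * u j x = a j := by
    intro j
    rw [hsumT (fun x => qh x * u j x) (fun x hx => by show qh x * u j x = 0; rw [hqh_zero x hx, zero_mul])]
    exact hqhC.2 j
  have hkey : co 0 + ∑ j, co j.succ * a j = 1 := by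
    have h1 : ∀ x ∈ T, qh x * (co 0 + ∑ j, co j.succ * u j x) = p x := by
      intro x hx
      have hpx := (hmemT x).1 hx
      rw [hcx x hpx, mul_comm]
      exact div_mul_cancel₀ _ (hqh_pos x hpx).ne'
    have h2 : ∑ x ∈ T, qh x * (co 0 + ∑ j, co j.succ * u j x) = 1 := by
      rw [Finset.sum_congr rfl h1, hsump]
    have h3 : ∑ x ∈ T, qh x * (co 0 + ∑ j, co j.succ * u j x)
        = co 0 * (∑ x ∈ T, qh x) + ∑ j, co j.succ * (∑ x ∈ T, qh x * u j x) := by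
      calc ∑ x ∈ T, qh x * (co 0 + ∑ j, co j.succ * u j x)
          = ∑ x ∈ T, (qh x * co 0 + ∑ j, co j.succ * (qh x * u j x)) := by
            refine Finset.sum_congr rfl fun x _ => ?_
            rw [mul_add, Finset.mul_sum]
            congr 1
            exact Finset.sum_congr rfl fun j _ => by ring
        _ = (∑ x ∈ T, qh x * co 0) + ∑ x ∈ T, ∑ j, co j.succ * (qh x * u j x) :=
            Finset.sum_add_distrib
        _ = co 0 * (∑ x ∈ T, qh x) + ∑ j, co j.succ * (∑ x ∈ T, qh x * u j x) := by
            rw [Finset.sum_comm]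
            congr 1
            · rw [Finset.mul_sum]; exact Finset.sum_congr rfl fun x _ => mul_comm _ _
            · exact Finset.sum_congr rfl fun j _ => by rw [Finset.mul_sum]
    rw [h3, hqh1, mul_one] at h2
    rw [← h2]
    congr 1
    exact Finset.sum_congr rfl fun j _ => by rw [hqhu j]
  refine ⟨qh, hqhC, hmax, huniq, ⟨fun j => -(co j.succ), ?_, hqh_zero⟩⟩
  intro x hx
  have e1 : ∑ j, -(co j.succ) * (u j x - a j)
      = (∑ j, co j.succ * a j) - ∑ j, co j.succ * u j x := by
    rw [← Finset.sum_sub_distrib]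
    exact Finset.sum_congr rfl fun j _ => by ring
  have e2 : 1 - ∑ j, -(co j.succ) * (u j x - a j) = p x / qh x := by
    rw [e1, ← hcx x hx]
    linarith [hkey]
  constructor
  · rw [e2]; exact div_pos hx (hqh_pos x hx)
  · rw [e2, inv_div, mul_comm, div_mul_cancel₀ _ (ne_of_gt hx)]
end
end

section
/- Stationarity of the Λ-family member: Let L(u,a) be a linear family, p ∈ P(X), and θ ∈ ℝ^k. Suppose q̂ ∈ L(u,a) satisfies, for every x ∈ S(p), 1 − Σ_{j=1}^k θ_j·(u_j(x) − a_j) > 0 and q̂(x) = p(x)·[1 − Σ_{j=1}^k θ_j·(u_j(x) − a_j)]^{-1}. Then for every q' ∈ L(u,a) with S(q') ⊆ S(p), one has Σ_{x ∈ S(p)} p(x)·(1 − q'(x)/q̂(x)) = 0. -/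
open scoped BigOperators Classical
open Filter Topology

noncomputable section

/- Off S(p) the tilted expression vanishes because S(q') ⊆ S(p); on S(p) the form of q̂ turns
p·(1 − q'/q̂) into p − q'·w with w = 1 − Σ θ_j (u_j − a_j). Both p and q' sum to one, and
q' ∈ L(u,a) makes every u_j − a_j centred under q', so Σ q'·w = 1 as well. -/

lemma mul_one_sub_div_mul_inv {p q c : ℝ} (hp : p ≠ 0) :
    p * (1 - q / (p * c⁻¹)) = p - q * c := by
  rcases eq_or_ne c 0 with rfl | hc
  · simp
  · field_simp

lemma sum_mul_one_sub_sum_mul_sub_eq_one {X : Type*} [Fintype X] {k : ℕ}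
    {u : Fin k → X → ℝ} {a : Fin k → ℝ} {q : X → ℝ} (hq : q ∈ linFam u a) (θ : Fin k → ℝ) :
    ∑ x, q x * (1 - ∑ j, θ j * (u j x - a j)) = 1 := by
  obtain ⟨⟨-, hq_sum⟩, hq_lin⟩ := hq
  have hcentred : ∀ j, ∑ x, q x * (u j x - a j) = 0 := fun j => by
    simp only [mul_sub, Finset.sum_sub_distrib, ← Finset.sum_mul, hq_lin j, hq_sum, one_mul,
      sub_self]
  calc ∑ x, q x * (1 - ∑ j, θ j * (u j x - a j))
      = ∑ x, q x - ∑ j, θ j * ∑ x, q x * (u j x - a j) := by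
        simp only [mul_one_sub, Finset.sum_sub_distrib, Finset.mul_sum]
        rw [Finset.sum_comm]
        simp only [mul_left_comm]
    _ = 1 := by simp [hcentred, hq_sum]

theorem lambda_family_stationarity_general {X : Type*} [Fintype X] {k : ℕ}
    (u : Fin k → X → ℝ) (a : Fin k → ℝ)
    (p : X → ℝ) (hp : p ∈ pmfSet X) (θ : Fin k → ℝ)
    (qhat : X → ℝ)
    (hform : ∀ x, 0 < p x →
      0 < 1 - ∑ j, θ j * (u j x - a j) ∧
      qhat x = p x * (1 - ∑ j, θ j * (u j x - a j))⁻¹) :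
    ∀ q' ∈ linFam u a, (∀ x, 0 < q' x → 0 < p x) →
      ∑ x ∈ Finset.univ.filter (fun x => 0 < p x), p x * (1 - q' x / qhat x) = 0 := by
  intro q' hq' hsupp
  set w : X → ℝ := fun x => 1 - ∑ j, θ j * (u j x - a j)
  have hterm : ∀ x ∈ Finset.univ.filter (fun x => 0 < p x),
      p x * (1 - q' x / qhat x) = p x - q' x * w x := fun x hx => by
    have hpx := (Finset.mem_filter.1 hx).2
    rw [(hform x hpx).2, mul_one_sub_div_mul_inv hpx.ne']
  have hvanish : ∀ x ∈ Finset.univ, p x - q' x * w x ≠ 0 → 0 < p x := fun x _ => by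
    contrapose!
    intro hpx
    have hpx0 : p x = 0 := le_antisymm hpx (hp.1 x)
    have hq'x0 : q' x = 0 := le_antisymm (not_lt.1 (mt (hsupp x) hpx.not_gt)) (hq'.1.1 x)
    simp [hpx0, hq'x0]
  rw [Finset.sum_congr rfl hterm, Finset.sum_filter_of_ne hvanish, Finset.sum_sub_distrib, hp.2,
    sum_mul_one_sub_sum_mul_sub_eq_one hq' θ, sub_self]

/-- Stationarity of the Λ-family member. -/
theorem lambda_family_stationarity {X : Type*} [Fintype X] [Nonempty X] {k : ℕ}
    (u : Fin k → X → ℝ) (a : Fin k → ℝ)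
    (p : X → ℝ) (hp : p ∈ pmfSet X) (θ : Fin k → ℝ)
    (qhat : X → ℝ) (hqhat : qhat ∈ linFam u a)
    (hform : ∀ x, 0 < p x →
      0 < 1 - ∑ j, θ j * (u j x - a j) ∧
      qhat x = p x * (1 - ∑ j, θ j * (u j x - a j))⁻¹) :
    ∀ q' ∈ linFam u a, (∀ x, 0 < q' x → 0 < p x) →
      ∑ x ∈ Finset.univ.filter (fun x => 0 < p x), p x * (1 - q' x / qhat x) = 0 :=
  lambda_family_stationarity_general u a p hp θ qhat hform
end
end

section
/- A Λ-family member of a linear family is the L-projection: Let L(u,a) be a nonempty linear family, let p ∈ P(X) satisfy S(p) = S(L(u,a)), and let θ ∈ ℝ^k. Suppose q̂ ∈ L(u,a) satisfies q̂(x) = p(x)·[1 − Σ_{j=1}^k θ_j·(u_j(x) − a_j)]^{-1} with positive denominator for every x ∈ S(p), and q̂(x) = 0 for x ∉ S(p). Then L(q'‖p) ≤ L(q̂‖p) for every q' ∈ L(u,a); that is, q̂ is an L-projection of p on L(u,a). -/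
open scoped BigOperators Classical
open Filter Topology

noncomputable section

lemma ereal_coe_sum' {X : Type*} [Fintype X] (f : X → ℝ) :
    ((∑ x, f x : ℝ) : EReal) = ∑ x, (f x : EReal) :=
  map_sum (⟨⟨(fun r : ℝ => (r : EReal)), EReal.coe_zero⟩,
    fun a b => EReal.coe_add a b⟩ : ℝ →+ EReal) f Finset.univ

/-- A Λ-family member of a linear family is the L-projection. -/
theorem lambda_member_is_Lprojection {X : Type*} [Fintype X] [Nonempty X] {k : ℕ}
    (u : Fin k → X → ℝ) (a : Fin k → ℝ) (hne : (linFam u a).Nonempty)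
    (p : X → ℝ) (hp : p ∈ pmfSet X)
    (hsupp : ∀ x, 0 < p x ↔ ∃ q ∈ linFam u a, 0 < q x)
    (θ : Fin k → ℝ)
    (qhat : X → ℝ) (hqhat : qhat ∈ linFam u a)
    (hform : ∀ x, 0 < p x →
      0 < 1 - ∑ j, θ j * (u j x - a j) ∧
      qhat x = p x * (1 - ∑ j, θ j * (u j x - a j))⁻¹)
    (hzero : ∀ x, ¬ 0 < p x → qhat x = 0) :
    ∀ q' ∈ linFam u a, Ldiv q' p ≤ Ldiv qhat p := by
  intro q' hq'
  have hq'mem := hq'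
  obtain ⟨⟨hq'nonneg, hq'sum⟩, hq'lin⟩ := hq'
  obtain ⟨hpnonneg, hpsum⟩ := hp
  have hq'zero : ∀ x, p x = 0 → q' x = 0 := by
    intro x hx
    by_contra h
    have h1 : 0 < q' x := lt_of_le_of_ne (hq'nonneg x) (Ne.symm h)
    have := (hsupp x).mpr ⟨q', hq'mem, h1⟩
    linarith
  have hqhatpos : ∀ x, 0 < p x → 0 < qhat x := by
    intro x hx
    obtain ⟨hd, hf⟩ := hform x hx
    rw [hf]
    exact mul_pos hx (inv_pos.mpr hd)
  have hrw : ∀ q : X → ℝ, (∀ x, p x ≠ 0 → q x ≠ 0) →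
      Ldiv q p = ((∑ x, if p x = 0 then (0:ℝ) else p x * Real.log (q x) : ℝ) : EReal) := by
    intro q hq
    unfold Ldiv
    rw [ereal_coe_sum']
    apply Finset.sum_congr rfl
    intro x _
    by_cases hx : p x = 0
    · simp [hx]
    · simp [hx, hq x hx]
  by_cases hcase : ∀ x, p x ≠ 0 → q' x ≠ 0
  · have hqhne : ∀ x, p x ≠ 0 → qhat x ≠ 0 := fun x hx =>
      ne_of_gt (hqhatpos x (lt_of_le_of_ne (hpnonneg x) (Ne.symm hx)))
    rw [hrw q' hcase, hrw qhat hqhne, EReal.coe_le_coe_iff]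
    have key : ∀ x, (if p x = 0 then (0:ℝ) else p x * Real.log (q' x)) -
        (if p x = 0 then (0:ℝ) else p x * Real.log (qhat x))
        ≤ q' x * (1 - ∑ j, θ j * (u j x - a j)) - p x := by
      intro x
      by_cases hx : p x = 0
      · simp [hx, hq'zero x hx]
      · have hpx : 0 < p x := lt_of_le_of_ne (hpnonneg x) (Ne.symm hx)
        obtain ⟨hd, hf⟩ := hform x hpx
        have hqh : 0 < qhat x := hqhatpos x hpx
        have hq'x : 0 < q' x := lt_of_le_of_ne (hq'nonneg x) (Ne.symm (hcase x hx))
        simp only [if_neg hx]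
        rw [← mul_sub, ← Real.log_div (ne_of_gt hq'x) (ne_of_gt hqh)]
        have hlog := Real.log_le_sub_one_of_pos (div_pos hq'x hqh)
        have hratio : p x / qhat x = 1 - ∑ j, θ j * (u j x - a j) := by
          rw [hf]
          field_simp
        have h2 : p x * (q' x / qhat x - 1) = q' x * (1 - ∑ j, θ j * (u j x - a j)) - p x := by
          rw [← hratio]
          field_simp
        calc p x * Real.log (q' x / qhat x) ≤ p x * (q' x / qhat x - 1) :=
              mul_le_mul_of_nonneg_left hlog hpx.le
          _ = q' x * (1 - ∑ j, θ j * (u j x - a j)) - p x := h2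
    have h1 : ∑ x, q' x * ∑ j, θ j * (u j x - a j) = 0 := by
      simp_rw [Finset.mul_sum]
      rw [Finset.sum_comm]
      apply Finset.sum_eq_zero
      intro j _
      have e : ∑ x, q' x * (θ j * (u j x - a j)) =
          θ j * (∑ x, q' x * u j x) - θ j * a j * ∑ x, q' x := by
        rw [Finset.mul_sum, Finset.mul_sum, ← Finset.sum_sub_distrib]
        apply Finset.sum_congr rfl
        intro x _
        ring
      rw [e, hq'lin j, hq'sum]
      ring
    have hsumC : ∑ x, (q' x * (1 - ∑ j, θ j * (u j x - a j)) - p x) = 0 := by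
      have expand : ∀ x, q' x * (1 - ∑ j, θ j * (u j x - a j)) - p x
          = q' x - q' x * (∑ j, θ j * (u j x - a j)) - p x := fun x => by ring
      simp_rw [expand]
      rw [Finset.sum_sub_distrib, Finset.sum_sub_distrib, hq'sum, hpsum, h1]
      ring
    have hs := Finset.sum_le_sum (s := Finset.univ) (fun x _ => key x)
    rw [Finset.sum_sub_distrib, hsumC] at hs
    linarith
  · push_neg at hcase
    obtain ⟨x0, hx0p, hx0q⟩ := hcase
    have hb : Ldiv q' p = ⊥ := by
      unfold Ldiv
      rw [← Finset.add_sum_erase _ _ (Finset.mem_univ x0)]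
      simp [hx0p, hx0q]
    rw [hb]
    exact bot_le
end
end

section
/- Continuity of the L-divergence in its first argument: For every fixed p ∈ P(X), the map q ↦ L(q‖p) = Σ_x p(x)·log q(x) is continuous as a function from P(X) (with the subspace topology from ℝ^m) to ℝ ∪ {−∞} equipped with the standard (order) topology. -/
open scoped BigOperators Classical
open Filter Topology

noncomputable section

lemma aux_add_cont {α : Type*} [TopologicalSpace α] {f g : α → EReal}
    (hf : Continuous f) (hg : Continuous g) (hf' : ∀ a, f a ≠ ⊤) (hg' : ∀ a, g a ≠ ⊤) :
    Continuous fun a => f a + g a := by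
  rw [continuous_iff_continuousAt]
  intro a
  exact (EReal.continuousAt_add (Or.inl (hf' a)) (Or.inr (hg' a))).comp
    (hf.continuousAt.prodMk hg.continuousAt)

lemma aux_sum_cont {α X : Type*} [TopologicalSpace α] [Fintype X] (f : X → α → EReal)
    (hf : ∀ x, Continuous (f x)) (hf' : ∀ x a, f x a ≠ ⊤) :
    Continuous fun a => ∑ x, f x a := by
  classical
  suffices h : ∀ s : Finset X, Continuous (fun a => ∑ x ∈ s, f x a) ∧
      ∀ a, (∑ x ∈ s, f x a) ≠ ⊤ from (h Finset.univ).1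
  intro s
  induction s using Finset.induction with
  | empty => simpa using continuous_const
  | insert a s hx ih =>
    simp only [Finset.sum_insert hx]
    exact ⟨aux_add_cont (hf _) ih.1 (hf' _) ih.2,
      fun a => (EReal.add_lt_top (hf' _ a) (ih.2 a)).ne⟩

noncomputable section
/-- Continuity of the L-divergence in its first argument. -/
theorem Ldiv_continuous_in_first_argument {X : Type*} [Fintype X] [Nonempty X]
    (p : X → ℝ) (hp : p ∈ pmfSet X) :
    Continuous fun q : ↥(pmfSet X) => Ldiv (q : X → ℝ) p := by
  unfold Ldiv
  refine aux_sum_cont _ (fun x => ?_) (fun x q => ?_)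
  swap
  · split_ifs <;> simp [← EReal.coe_mul, EReal.coe_ne_top]
  by_cases hpx : p x = 0
  · simp only [hpx, if_pos rfl]; exact continuous_const
  have hpx' : 0 < p x := lt_of_le_of_ne (hp.1 x) (Ne.symm hpx)
  simp only [if_neg hpx]
  have hcoord : Continuous fun q : ↥(pmfSet X) => (q : X → ℝ) x :=
    (continuous_apply x).comp continuous_subtype_val
  rw [continuous_iff_continuousAt]
  intro q0
  by_cases h0 : (q0 : X → ℝ) x = 0
  · -- tendsto to ⊥
    have : Tendsto (fun q : ↥(pmfSet X) =>
        if (q : X → ℝ) x = 0 then (⊥ : EReal) else (↑(p x * Real.log ((q : X → ℝ) x)) : EReal))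
        (𝓝 q0) (𝓝 ⊥) := by
      rw [EReal.tendsto_nhds_bot_iff_real]
      intro M
      have hev : ∀ᶠ q : ↥(pmfSet X) in 𝓝 q0, (q : X → ℝ) x < Real.exp (M / p x) := by
        have := hcoord.continuousAt (x := q0)
        have hlt : (q0 : X → ℝ) x < Real.exp (M / p x) := by
          rw [h0]; exact Real.exp_pos _
        exact this.eventually_lt continuousAt_const hlt
      filter_upwards [hev] with q hq
      by_cases hz : (q : X → ℝ) x = 0
      · simp [hz]
      · have hqpos : 0 < (q : X → ℝ) x := lt_of_le_of_ne (q.2.1 x) (Ne.symm hz)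
        simp only [if_neg hz]
        rw [EReal.coe_lt_coe_iff]
        have : Real.log ((q : X → ℝ) x) < M / p x := (Real.log_lt_iff_lt_exp hqpos).2 hq
        calc p x * Real.log ((q : X → ℝ) x) < p x * (M / p x) :=
              (mul_lt_mul_iff_right₀ hpx').2 this
          _ = M := by field_simp
    simpa [ContinuousAt, h0] using this
  · -- locally equal to continuous real function
    have hev : ∀ᶠ q : ↥(pmfSet X) in 𝓝 q0,
        (fun q : ↥(pmfSet X) =>
          if (q : X → ℝ) x = 0 then (⊥ : EReal) else (↑(p x * Real.log ((q : X → ℝ) x)) : EReal)) q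
        = (↑(p x * Real.log ((q : X → ℝ) x)) : EReal) := by
      have hne : ∀ᶠ q : ↥(pmfSet X) in 𝓝 q0, (q : X → ℝ) x ≠ 0 := by
        have : IsOpen {q : ↥(pmfSet X) | (q : X → ℝ) x ≠ 0} :=
          isOpen_ne.preimage hcoord
        exact this.mem_nhds h0
      filter_upwards [hne] with q hq
      simp [hq]
    refine ContinuousAt.congr ?_ (Filter.EventuallyEq.symm hev)
    have hq0pos : 0 < (q0 : X → ℝ) x := lt_of_le_of_ne (q0.2.1 x) (Ne.symm h0)
    have hc1 : ContinuousAt (fun q : ↥(pmfSet X) => (q : X → ℝ) x) q0 := hcoord.continuousAt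
    have hc2 : ContinuousAt Real.log ((q0 : X → ℝ) x) := Real.continuousAt_log (ne_of_gt hq0pos)
    have hc3 : ContinuousAt (fun q : ↥(pmfSet X) => Real.log ((q : X → ℝ) x)) q0 :=
      Filter.Tendsto.comp hc2 hc1
    have : ContinuousAt (fun q : ↥(pmfSet X) => p x * Real.log ((q : X → ℝ) x)) q0 :=
      continuousAt_const.mul hc3
    exact (continuous_coe_real_ereal.continuousAt).comp this
end
end
end
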